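/- arXiv:2506.07128 — 2 statements merged into one kernel-verified Lean document; each statement's English description precedes it below -/
import Mathlib

section
/- (Upper and lower bounds for the relaxed auxiliary variable, equation (2.10) of the paper.) Let τ > 0, Ẽ > 0, κ̃ ≥ 0 and r̃ ≥ 0, E' ≥ 0 be real numbers. Define σ₀ by the four cases of Theorem 2.1: σ₀ = 0 if r̃ ≥ E', or if r̃ < E' and r̃ − E' + τ·(r̃/Ẽ)·κ̃ ≥ 0; and σ₀ = 1 − (τ·r̃·κ̃)/(Ẽ·(E' − r̃)) if r̃ < E' and r̃ − E' + τ·(r̃/Ẽ)·κ̃ < 0. Then rⁿ⁺¹ := σ₀·r̃ + (1 − σ₀)·E' satisfies 0 ≤ rⁿ⁺¹ ≤ E'. -/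
/-- Upper and lower bounds for the relaxed auxiliary variable (eq. (2.10)). -/
theorem stmt_7 (τ Et kt rt E' : ℝ) (hτ : 0 < τ) (hEt : 0 < Et) (hkt : 0 ≤ kt)
    (hrt : 0 ≤ rt) (hE' : 0 ≤ E') :
    let σ₀ : ℝ :=
      if rt < E' ∧ rt - E' + τ * (rt / Et) * kt < 0 then
        1 - (τ * rt * kt) / (Et * (E' - rt))
      else 0
    let rnew : ℝ := σ₀ * rt + (1 - σ₀) * E'
    0 ≤ rnew ∧ rnew ≤ E' := by
  dsimp only
  split_ifs with h
  · obtain ⟨h1, h2⟩ := h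
    have hd : 0 < E' - rt := by linarith
    set a : ℝ := τ * rt * kt / (Et * (E' - rt)) with ha_def
    have ha0 : 0 ≤ a := by positivity
    have ha1 : a < 1 := by
      rw [ha_def, div_lt_one (by positivity)]
      have h3 : τ * (rt / Et) * kt < E' - rt := by linarith
      have h4 : Et * (τ * (rt / Et) * kt) = τ * rt * kt := by
        field_simp
      nlinarith
    constructor
    · nlinarith
    · nlinarith
  · constructor
    · simpa using hE'
    · simp
end

section
/- (One-step form of Theorem 2.1.) Let τ > 0, Ẽ > 0, κ̃ ≥ 0, K > 0, E' ≥ 0 and r ≥ 0 be real numbers. Set r̃ = r / (1 + τ·κ̃/Ẽ) and ξ = r̃/Ẽ. Define (σ₀, δ) by the four cases of Theorem 2.1: if r̃ = E', then σ₀ = 0 and δ = (r̃·κ̃)/(Ẽ·K); if r̃ > E', or if r̃ < E' and r̃ − E' + τ·(r̃/Ẽ)·κ̃ ≥ 0, then σ₀ = 0 and δ = (r̃ − E')/(τ·K) + (r̃·κ̃)/(Ẽ·K); if r̃ < E' and r̃ − E' + τ·(r̃/Ẽ)·κ̃ < 0, then σ₀ = 1 − (τ·r̃·κ̃)/(Ẽ·(E'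 − r̃)) and δ = 0. Then: r̃ ≥ 0, ξ ≥ 0, σ₀ ∈ [0,1], δ ≥ 0, the relaxed value rⁿ⁺¹ := σ₀·r̃ + (1 − σ₀)·E' satisfies the constraint (rⁿ⁺¹ − r̃)/τ = −δ·K + (r̃/Ẽ)·κ̃, the dissipation identity rⁿ⁺¹ − r = −τ·δ·K ≤ 0 holds, and 0 ≤ rⁿ⁺¹ ≤ E'. -/
set_option maxHeartbeats 1000000 in
/-- One-step form of Theorem 2.1. -/
theorem stmt_8 (τ Et kt K E' r : ℝ) (hτ : 0 < τ) (hEt : 0 < Et) (hkt : 0 ≤ kt)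
    (hK : 0 < K) (hE' : 0 ≤ E') (hr : 0 ≤ r) :
    let rt : ℝ := r / (1 + τ * kt / Et)
    let ξ : ℝ := rt / Et
    let σ₀ : ℝ :=
      if rt = E' then 0
      else if rt < E' ∧ rt - E' + τ * (rt / Et) * kt < 0 then
        1 - (τ * rt * kt) / (Et * (E' - rt))
      else 0
    let δ : ℝ :=
      if rt = E' then (rt * kt) / (Et * K)
      else if rt < E' ∧ rt - E' + τ * (rt / Et) * kt < 0 then 0
      else (rt - E') / (τ * K) + (rt * kt) / (Et * K)
    let rnew : ℝ := σ₀ * rt + (1 - σ₀) * E'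
    0 ≤ rt ∧ 0 ≤ ξ ∧ σ₀ ∈ Set.Icc (0 : ℝ) 1 ∧ 0 ≤ δ ∧
      (rnew - rt) / τ = -δ * K + (rt / Et) * kt ∧
      rnew - r = -τ * δ * K ∧ rnew - r ≤ 0 ∧
      0 ≤ rnew ∧ rnew ≤ E' := by
  intro rt ξ σ₀ δ rnew
  have hrt_def : rt = r / (1 + τ * kt / Et) := rfl
  have hξdef : ξ = rt / Et := rfl
  have hσdef : σ₀ = if rt = E' then 0
      else if rt < E' ∧ rt - E' + τ * (rt / Et) * kt < 0 then
        1 - (τ * rt * kt) / (Et * (E' - rt))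
      else 0 := rfl
  have hδdef : δ = if rt = E' then (rt * kt) / (Et * K)
      else if rt < E' ∧ rt - E' + τ * (rt / Et) * kt < 0 then 0
      else (rt - E') / (τ * K) + (rt * kt) / (Et * K) := rfl
  have hrnew : rnew = σ₀ * rt + (1 - σ₀) * E' := rfl
  have hd : 0 < 1 + τ * kt / Et := by positivity
  have hrt0 : 0 ≤ rt := by rw [hrt_def]; positivity
  have hkey : rt * Et + τ * rt * kt = r * Et := by
    rw [hrt_def]; field_simp
  clear_value rt ξ σ₀ δ rnew
  have hτ' : τ ≠ 0 := hτ.ne'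
  have hEt' : Et ≠ 0 := hEt.ne'
  have hK' : K ≠ 0 := hK.ne'
  have hξ0 : 0 ≤ ξ := hξdef ▸ div_nonneg hrt0 hEt.le
  have hdiv : rt / Et * Et = rt := div_mul_cancel₀ rt hEt'
  have e2 : τ * (rt / Et) * kt * Et = τ * rt * kt := by
    rw [show τ * (rt / Et) * kt * Et = τ * (rt / Et * Et) * kt from by ring, hdiv]
  have h5 : r - rt = τ * (rt / Et) * kt := by
    have h6 : (r - rt) * Et = (τ * (rt / Et) * kt) * Et := by linarith [hkey, e2]
    exact mul_right_cancel₀ hEt' h6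
  by_cases h1 : rt = E'
  · have hσ : σ₀ = 0 := by rw [hσdef, if_pos h1]
    have hδ : δ = (rt * kt) / (Et * K) := by rw [hδdef, if_pos h1]
    refine ⟨hrt0, hξ0, ⟨le_of_eq hσ.symm, by rw [hσ]; norm_num⟩,
      by rw [hδ]; positivity, ?_, ?_, ?_, ?_, ?_⟩
    · rw [hrnew, hσ, hδ, ← h1]; field_simp; ring
    · rw [hrnew, hσ, hδ, ← h1]
      field_simp
      nlinarith [hkey]
    · rw [hrnew, hσ, ← h1]
      nlinarith [hkey, mul_nonneg (mul_nonneg hτ.le hrt0) hkt]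
    · rw [hrnew, hσ]; nlinarith
    · rw [hrnew, hσ]; nlinarith
  · by_cases h2 : rt < E' ∧ rt - E' + τ * (rt / Et) * kt < 0
    · have hσ : σ₀ = 1 - (τ * rt * kt) / (Et * (E' - rt)) := by
        rw [hσdef, if_neg h1, if_pos h2]
      have hδ : δ = 0 := by rw [hδdef, if_neg h1, if_pos h2]
      have hgap : 0 < E' - rt := by linarith [h2.1]
      have hgap' : E' - rt ≠ 0 := hgap.ne'
      have hs : τ * rt * kt / (Et * (E' - rt)) * (E' - rt) = τ * rt * kt / Et := by
        field_simp
      have hcond : τ * rt * kt < Et * (E' - rt) := by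
        have h22 := mul_lt_mul_of_pos_right h2.2 hEt
        have e3 : (rt - E' + τ * (rt / Et) * kt) * Et
            = (rt - E') * Et + τ * rt * kt := by
          rw [show (rt - E' + τ * (rt / Et) * kt) * Et
              = (rt - E') * Et + τ * (rt / Et) * kt * Et from by ring, e2]
        rw [e3] at h22
        nlinarith [h22]
      have hrnew_eq : rnew = r := by
        rw [hrnew, hσ]
        rw [show (1 - τ * rt * kt / (Et * (E' - rt))) * rt
            + (1 - (1 - τ * rt * kt / (Et * (E' - rt)))) * E'
            = rt + (τ * rt * kt / (Et * (E' - rt))) * (E' - rt) from by ring, hs]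
        have h7 : τ * rt * kt / Et = τ * (rt / Et) * kt := by ring
        linarith [h5, h7]
      refine ⟨hrt0, hξ0, ⟨?_, ?_⟩, le_of_eq hδ.symm, ?_, ?_, ?_, ?_, ?_⟩
      · rw [hσ]
        have : (τ * rt * kt) / (Et * (E' - rt)) ≤ 1 := by
          rw [div_le_one (by positivity)]; linarith
        linarith
      · rw [hσ]
        have : 0 ≤ (τ * rt * kt) / (Et * (E' - rt)) := by positivity
        linarith
      · rw [hrnew_eq, hδ, h5]
        field_simp
        ring
      · rw [hrnew_eq, hδ]; ring
      · rw [hrnew_eq]; linarith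
      · rw [hrnew_eq]; exact hr
      · rw [hrnew_eq]; linarith [h5, h2.2]
    · have hσ : σ₀ = 0 := by rw [hσdef, if_neg h1, if_neg h2]
      have hδ : δ = (rt - E') / (τ * K) + (rt * kt) / (Et * K) := by
        rw [hδdef, if_neg h1, if_neg h2]
      have hδ0 : 0 ≤ δ := by
        rw [hδ]
        rcases lt_or_ge rt E' with hlt | hge
        · have hc : 0 ≤ rt - E' + τ * (rt / Et) * kt := by
            by_contra hc
            exact h2 ⟨hlt, lt_of_not_ge hc⟩
          have h3 : 0 ≤ (rt - E') * Et + τ * rt * kt := by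
            have h4 := mul_nonneg hc hEt.le
            have e3 : (rt - E' + τ * (rt / Et) * kt) * Et
                = (rt - E') * Et + τ * rt * kt := by
              rw [show (rt - E' + τ * (rt / Et) * kt) * Et
                  = (rt - E') * Et + τ * (rt / Et) * kt * Et from by ring, e2]
            linarith [e3 ▸ h4]
          rw [div_add_div _ _ (by positivity : (τ * K) ≠ 0) (by positivity : (Et * K) ≠ 0)]
          apply div_nonneg _ (by positivity)
          nlinarith [mul_nonneg hK.le h3]
        · have : 0 ≤ rt - E' := by
            rcases lt_or_eq_of_le hge with h | h
            · linarith
            · exact absurd h.symm h1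
          positivity
      have hrnew_eq : rnew = E' := by rw [hrnew, hσ]; ring
      have hRHS : -τ * ((rt - E') / (τ * K) + rt * kt / (Et * K)) * K
          = (E' - rt) - τ * (rt / Et) * kt := by
        field_simp
        ring
      refine ⟨hrt0, hξ0, ⟨le_of_eq hσ.symm, by rw [hσ]; norm_num⟩, hδ0, ?_, ?_, ?_, ?_, ?_⟩
      · rw [hrnew_eq, hδ]
        field_simp
        ring
      · rw [hrnew_eq, hδ, hRHS]
        linarith [h5]
      · have heq : rnew - r = -τ * δ * K := by
          rw [hrnew_eq, hδ, hRHS]; linarith [h5]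
        rw [heq]
        nlinarith [mul_nonneg (mul_nonneg hτ.le hδ0) hK.le]
      · rw [hrnew_eq]; exact hE'
      · rw [hrnew_eq]
end
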